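/- arXiv:2605.13768 — 2 statements merged into one kernel-verified Lean document; each statement's English description precedes it below -/
import Mathlib

section
/- Let 𝒜 = diag(α_1,…,α_n) and for each z ∈ ℤⁿ define the decision region 𝒟_z = U·𝒜·z + 𝒫. Then the family {𝒟_z : z ∈ ℤⁿ} is a partition of ℝⁿ (every y ∈ ℝⁿ belongs to exactly one 𝒟_z), and for every y ∈ ℝⁿ and z ∈ ℤⁿ one has c_SIC(y) = 𝒜·z if and only if y ∈ 𝒟_z. -/
open Finset

/-- The SIC (successive interference cancellation) quantizer with respect to an
upper-triangular matrix `U` and per-coordinate spacings `α`, defined by backward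
recursion `c_SIC(y)_i = α_i ⌊(y_i − Σ_{j>i} U_{i,j} c_SIC(y)_j)/(α_i U_{i,i}) + 1/2⌋`. -/
noncomputable def cSIC {n : ℕ} (U : Matrix (Fin n) (Fin n) ℝ) (α : Fin n → ℝ)
    (y : Fin n → ℝ) : Fin n → ℝ
  | i =>
    α i * ((round ((y i - ∑ j ∈ (Finset.univ.filter fun j => i < j).attach,
        U i j.1 * cSIC U α y j.1) / (α i * U i i)) : ℤ) : ℝ)
termination_by i => n - i.1
decreasing_by
  have h := j.2
  simp only [Finset.mem_filter, Finset.mem_univ, true_and] at h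
  have h2 : (j.1 : ℕ) < n := j.1.isLt
  have h3 : (i : ℕ) < (j.1 : ℕ) := h
  omega

/-- The decision region `𝒟_z = U·𝒜·z + 𝒫` of the SIC quantizer, where
`𝒫 = ∏_i [−α_i U_{i,i}/2, α_i U_{i,i}/2)` and `𝒜 = diag(α)`. -/
def decisionRegion {n : ℕ} (U : Matrix (Fin n) (Fin n) ℝ) (α : Fin n → ℝ)
    (z : Fin n → ℤ) : Set (Fin n → ℝ) :=
  {y | ∀ i : Fin n, y i - U.mulVec (fun j => α j * (z j : ℝ)) i ∈
    Set.Ico (-(α i * U i i) / 2) (α i * U i i / 2)}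

/-!
Membership of `y` in `𝒟_z` is a system of conditions, one per row `i`, saying that
`(y_i − Σ_{j>i} U_{i,j} α_j z_j)/(α_i U_{i,i})` rounds to `z_i`; upper triangularity is what
isolates the diagonal term. Row `i` only involves `z_j` for `j ≥ i`, so this triangular system is
solved uniquely by back substitution, which is exactly the recursion defining `c_SIC`.
-/

theorem round_div_eq_iff {K : Type*} [Field K] [LinearOrder K] [IsStrictOrderedRing K]
    [FloorRing K] {x b : K} (hb : 0 < b) (m : ℤ) :
    round (x / b) = m ↔ x - b * m ∈ Set.Ico (-b / 2) (b / 2) := by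
  rw [round_eq_iff, Set.mem_Ico, Set.mem_Ico, le_div_iff₀ hb, div_lt_iff₀ hb]
  constructor <;> rintro ⟨h₁, h₂⟩ <;> constructor <;> linarith

theorem Matrix.mulVec_apply_eq_diag_add_sum_lt {ι R : Type*} [Fintype ι] [LinearOrder ι]
    [NonUnitalNonAssocSemiring R] {U : Matrix ι ι R} (hUtri : ∀ i j, j < i → U i j = 0)
    (v : ι → R) (i : ι) :
    U.mulVec v i = U i i * v i + ∑ j ∈ univ.filter (fun j => i < j), U i j * v j := by
  have h_le : ∑ j ∈ univ.filter (fun j => i ≤ j), U i j * v j = U.mulVec v i := by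
    refine sum_filter_of_ne fun j _ hne => ?_
    by_contra! hji
    exact hne (by rw [hUtri i j hji, zero_mul])
  have h_insert : univ.filter (fun j => i ≤ j) = insert i (univ.filter fun j => i < j) := by
    ext j
    simp only [mem_filter, mem_univ, true_and, mem_insert, le_iff_eq_or_lt, eq_comm]
  rw [← h_le, h_insert, sum_insert (by simp)]

section SIC

variable {n : ℕ} (U : Matrix (Fin n) (Fin n) ℝ) (α : Fin n → ℝ)

theorem cSIC_apply (y : Fin n → ℝ) (i : Fin n) :
    cSIC U α y i = α i * (round ((y i - ∑ j ∈ univ.filter (fun j => i < j),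
      U i j * cSIC U α y j) / (α i * U i i)) : ℝ) := by
  rw [cSIC, ← sum_attach (univ.filter fun j => i < j)]

theorem exists_cSIC_eq (y : Fin n → ℝ) : ∃ z : Fin n → ℤ, cSIC U α y = fun i => α i * z i :=
  ⟨_, funext (cSIC_apply U α y)⟩

/-- Row `i` of the back-substitution system `c_SIC(y) = 𝒜 z`. -/
def RoundsAt (y : Fin n → ℝ) (z : Fin n → ℤ) (i : Fin n) : Prop :=
  round ((y i - ∑ j ∈ univ.filter (fun j => i < j), U i j * (α j * z j)) / (α i * U i i)) = z i

theorem mem_decisionRegion_iff (hUtri : ∀ i j : Fin n, j < i → U i j = 0)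
    (hpos : ∀ i, 0 < α i * U i i) (y : Fin n → ℝ) (z : Fin n → ℤ) :
    y ∈ decisionRegion U α z ↔ ∀ i, RoundsAt U α y z i := by
  refine forall_congr' fun i => ?_
  rw [RoundsAt, round_div_eq_iff (hpos i), Matrix.mulVec_apply_eq_diag_add_sum_lt hUtri]
  ring_nf

theorem cSIC_eq_iff (hα : ∀ i, α i ≠ 0) (y : Fin n → ℝ) (z : Fin n → ℤ) :
    cSIC U α y = (fun i => α i * z i) ↔ ∀ i, RoundsAt U α y z i := by
  constructor
  · intro h i
    have hi := cSIC_apply U α y i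
    simp only [h, mul_right_inj' (hα i)] at hi
    exact_mod_cast hi.symm
  · intro h
    funext i
    induction i using WellFoundedGT.induction with
    | _ i ih =>
      have hi := h i
      rw [RoundsAt] at hi
      rw [cSIC_apply, ← hi, sum_congr rfl fun j hj => by rw [ih j (mem_filter.mp hj).2]]

end SIC

theorem sic_decision_regions_partition_general {n : ℕ}
    (U : Matrix (Fin n) (Fin n) ℝ)
    (hUtri : ∀ i j : Fin n, j < i → U i j = 0)
    (hUdiag : ∀ i : Fin n, 0 < U i i)
    (α : Fin n → ℝ) (hα : ∀ i : Fin n, 0 < α i) :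
    (∀ y : Fin n → ℝ, ∃! z : Fin n → ℤ, y ∈ decisionRegion U α z) ∧
    (∀ (y : Fin n → ℝ) (z : Fin n → ℤ),
      cSIC U α y = (fun i => α i * (z i : ℝ)) ↔ y ∈ decisionRegion U α z) := by
  have hpos i : 0 < α i * U i i := mul_pos (hα i) (hUdiag i)
  have hiff (y : Fin n → ℝ) (z : Fin n → ℤ) :
      cSIC U α y = (fun i => α i * (z i : ℝ)) ↔ y ∈ decisionRegion U α z := by
    rw [cSIC_eq_iff U α (fun i => (hα i).ne'), mem_decisionRegion_iff U α hUtri hpos]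
  refine ⟨fun y => ?_, hiff⟩
  obtain ⟨z, hz⟩ := exists_cSIC_eq U α y
  refine ⟨z, (hiff y z).mp hz, fun z' hz' => funext fun i => ?_⟩
  have h := congr_fun (((hiff y z').mpr hz').symm.trans hz) i
  exact_mod_cast mul_left_cancel₀ (hα i).ne' h

/-- the decision regions `{𝒟_z : z ∈ ℤⁿ}` partition `ℝⁿ` (every `y`
belongs to exactly one of them), and `c_SIC(y) = 𝒜·z` iff `y ∈ 𝒟_z`. -/
theorem sic_decision_regions_partition {n : ℕ} (hn : 1 ≤ n)
    (U : Matrix (Fin n) (Fin n) ℝ)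
    (hUtri : ∀ i j : Fin n, j < i → U i j = 0)
    (hUdiag : ∀ i : Fin n, 0 < U i i)
    (α : Fin n → ℝ) (hα : ∀ i : Fin n, 0 < α i) :
    (∀ y : Fin n → ℝ, ∃! z : Fin n → ℤ, y ∈ decisionRegion U α z) ∧
    (∀ (y : Fin n → ℝ) (z : Fin n → ℤ),
      cSIC U α y = (fun i => α i * (z i : ℝ)) ↔ y ∈ decisionRegion U α z) :=
  sic_decision_regions_partition_general U hUtri hUdiag α hα
end

section
/- Let n ≥ 1 and 1 ≤ k ≤ n, let V be a random matrix distributed according to the Haar probability measure on the orthogonal group O(n), and let Ṽ ∈ ℝ^{n×k} be the matrix formed by the first k columns of V. Then for every subset S ⊆ {1,…,n} with |S| = k, letting Ṽ_S ∈ ℝ^{k×k} be the submatrix of Ṽ with rows indexed by S, one has E[det(Ṽ_S)²] = 1/C(n,k), where C(n,k) is the binomial coefficient. -/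
/-!
By Cauchy–Binet, the squares of the `k × k` minors of an `n × k` matrix with orthonormal columns
sum to `det (Ṽᵀ Ṽ) = 1`. Left multiplication by a permutation matrix permutes the rows of `V`
and preserves the Haar measure, and any `k` rows can be moved onto any other `k` rows in this way,
so all `C(n,k)` expected squared minors are equal and each is `1 / C(n,k)`.
-/

open MeasureTheory Finset Matrix

/-- Borel measurable structure on the space of real matrices. -/
noncomputable instance matrixMeasurableSpace {n : ℕ} :
    MeasurableSpace (Matrix (Fin n) (Fin n) ℝ) := borel _

instance matrixBorelSpace {n : ℕ} :
    BorelSpace (Matrix (Fin n) (Fin n) ℝ) := ⟨rfl⟩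

open Set.powersetCard

section CauchyBinet

open exteriorPower

variable {R m : Type*} [CommRing R] [Fintype m] [LinearOrder m] {k : ℕ}

/-- The Cauchy–Binet formula: pair the exterior product of the rows of `A` with that of the
columns of `B`, after expanding the latter in the basis of `⋀^k (m → R)` indexed by `k`-subsets. -/
theorem Matrix.det_mul_eq_sum_det_submatrix (A : Matrix (Fin k) m R) (B : Matrix m (Fin k) R) :
    (A * B).det = ∑ s : Set.powersetCard m k,
      (A.submatrix id (ofFinEmbEquiv.symm s)).det *
        (B.submatrix (ofFinEmbEquiv.symm s) id).det := by
  let rowsA : Fin k → Module.Dual R (m → R) := fun i => (LinearMap.proj i).comp A.mulVecLin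
  let colsB : Fin k → m → R := fun j l => B l j
  let b := (Pi.basisFun R m).exteriorPower k
  have hAB : pairingDual R _ k (ιMulti R k rowsA) (ιMulti R k colsB) = (A * B).det := by
    rw [pairingDual_ιMulti_ιMulti, ← det_transpose]
    rfl
  have hA (s) : pairingDual R _ k (ιMulti R k rowsA) (b s) =
      (A.submatrix id (ofFinEmbEquiv.symm s)).det := by
    rw [basis_apply, ιMulti_family, pairingDual_ιMulti_ιMulti, ← det_transpose]
    congr 1
    ext i j
    simp [rowsA]
  have hB (s) : b.repr (ιMulti R k colsB) s = (B.submatrix (ofFinEmbEquiv.symm s) id).det := by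
    rw [basis_repr_apply, ιMultiDual_apply_ιMulti, ← det_transpose]
    rfl
  rw [← hAB, ← b.sum_repr (ιMulti R k colsB), map_sum]
  simp only [map_smul, hA, hB, smul_eq_mul, mul_comm]

theorem Matrix.sum_det_submatrix_sq_eq_one {W : Matrix m (Fin k) R} (hW : Wᵀ * W = 1) :
    ∑ s : Set.powersetCard m k, (W.submatrix (ofFinEmbEquiv.symm s) id).det ^ 2 = 1 := by
  rw [← det_one (n := Fin k) (R := R), ← hW, det_mul_eq_sum_det_submatrix]
  refine sum_congr rfl fun s _ => ?_
  rw [sq, ← det_transpose (W.submatrix _ id)]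
  rfl

theorem Matrix.det_submatrix_sq_le_one [LinearOrder R] [IsStrictOrderedRing R]
    {W : Matrix m (Fin k) R} (hW : Wᵀ * W = 1) (s : Set.powersetCard m k) :
    (W.submatrix (ofFinEmbEquiv.symm s) id).det ^ 2 ≤ 1 := by
  rw [← sum_det_submatrix_sq_eq_one hW]
  exact single_le_sum (fun t _ => sq_nonneg (W.submatrix (ofFinEmbEquiv.symm t) id).det)
    (mem_univ s)

end CauchyBinet

theorem Matrix.transpose_mul_self_submatrix_of_mem_orthogonalGroup {R m ι : Type*} [CommRing R]
    [Fintype m] [DecidableEq m] [DecidableEq ι] {V : Matrix m m R}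
    (hV : V ∈ orthogonalGroup m R) {c : ι → m} (hc : Function.Injective c) :
    (V.submatrix id c)ᵀ * V.submatrix id c = 1 := by
  rw [transpose_submatrix, ← submatrix_mul _ _ _ _ _ Function.bijective_id,
    (mem_orthogonalGroup_iff' m R).mp hV, submatrix_one c hc]

theorem Equiv.Perm.permMatrix_mem_orthogonalGroup {R m : Type*} [CommRing R] [Fintype m]
    [DecidableEq m] (σ : Equiv.Perm m) : σ.permMatrix R ∈ orthogonalGroup m R := by
  rw [mem_orthogonalGroup_iff, transpose_permMatrix, ← permMatrix_mul, inv_mul_cancel,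
    permMatrix_one]

section Haar

variable {n : ℕ} (μ : Measure (orthogonalGroup (Fin n) ℝ)) [μ.IsMulLeftInvariant]

theorem integral_comp_submatrix_perm (F : Matrix (Fin n) (Fin n) ℝ → ℝ) (σ : Equiv.Perm (Fin n)) :
    ∫ V : orthogonalGroup (Fin n) ℝ, F ((V : Matrix (Fin n) (Fin n) ℝ).submatrix σ id) ∂μ =
      ∫ V, F V ∂μ := by
  let g : orthogonalGroup (Fin n) ℝ := ⟨σ.permMatrix ℝ, σ.permMatrix_mem_orthogonalGroup⟩
  have hg (V : orthogonalGroup (Fin n) ℝ) :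
      ((g * V : orthogonalGroup (Fin n) ℝ) : Matrix (Fin n) (Fin n) ℝ) =
        (V : Matrix (Fin n) (Fin n) ℝ).submatrix σ id :=
    PEquiv.toMatrix_toPEquiv_mul σ V.1
  simp_rw [← hg]
  exact integral_mul_left_eq_self (fun V : orthogonalGroup (Fin n) ℝ => F V) g

theorem integral_det_submatrix_sq_eq {k : ℕ} (c : Fin k → Fin n) {r r' : Fin k → Fin n}
    (hr : Function.Injective r) (hr' : Function.Injective r') :
    ∫ V : orthogonalGroup (Fin n) ℝ, ((V : Matrix (Fin n) (Fin n) ℝ).submatrix r c).det ^ 2 ∂μ =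
      ∫ V : orthogonalGroup (Fin n) ℝ,
        ((V : Matrix (Fin n) (Fin n) ℝ).submatrix r' c).det ^ 2 ∂μ := by
  obtain ⟨σ, hσ⟩ := Equiv.Perm.exists_extending_pair r' r hr' hr
  have hr_eq : r = σ ∘ r' := funext fun i => (hσ i).symm
  rw [hr_eq, ← integral_comp_submatrix_perm μ (fun M => (M.submatrix r' c).det ^ 2) σ]
  rfl

end Haar

theorem expected_square_minor_haar_general {n k : ℕ}
    (hkn : k ≤ n)
    (μ : Measure (Matrix.orthogonalGroup (Fin n) ℝ)) [IsProbabilityMeasure μ]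
    (hinv : ∀ g : Matrix.orthogonalGroup (Fin n) ℝ,
      Measure.map (fun x => g * x) μ = μ)
    (S : Finset (Fin n)) (hS : S.card = k) :
    ∫ V : Matrix.orthogonalGroup (Fin n) ℝ,
        (((V : Matrix (Fin n) (Fin n) ℝ).submatrix
            (fun i : Fin k => (S.orderIsoOfFin hS i : Fin n))
            (Fin.castLE hkn)).det) ^ 2 ∂μ =
      1 / (n.choose k : ℝ) := by
  have : μ.IsMulLeftInvariant := ⟨hinv⟩
  let minorSq (s : Set.powersetCard (Fin n) k) (V : orthogonalGroup (Fin n) ℝ) : ℝ :=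
    ((V : Matrix (Fin n) (Fin n) ℝ).submatrix (ofFinEmbEquiv.symm s) (Fin.castLE hkn)).det ^ 2
  have hcols (V : orthogonalGroup (Fin n) ℝ) :=
    transpose_mul_self_submatrix_of_mem_orthogonalGroup V.2 (Fin.castLE_injective hkn)
  have hint (s) : Integrable (minorSq s) μ := by
    refine .of_bound ?_ 1 (ae_of_all _ fun V => ?_)
    · exact ((continuous_id.matrix_submatrix _ _).matrix_det.pow 2).measurable.comp
        measurable_subtype_coe |>.aestronglyMeasurable
    · rw [Real.norm_of_nonneg (sq_nonneg _)]
      exact det_submatrix_sq_le_one (hcols V) s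
  have hsum : ∑ s, ∫ V, minorSq s V ∂μ = 1 := calc
    _ = ∫ V, ∑ s, minorSq s V ∂μ := (integral_finsetSum _ fun s _ => hint s).symm
    _ = ∫ _, 1 ∂μ := integral_congr_ae (ae_of_all _ fun V => sum_det_submatrix_sq_eq_one (hcols V))
    _ = 1 := by simp
  rw [sum_congr rfl fun s _ => integral_det_submatrix_sq_eq μ _
      (ofFinEmbEquiv.symm s).injective fun i j h => (S.orderIsoOfFin hS).injective (Subtype.ext h),
    sum_const, card_univ, ← Nat.card_eq_fintype_card, Set.powersetCard.card, Nat.card_fin,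
    nsmul_eq_mul] at hsum
  exact eq_one_div_of_mul_eq_one_right hsum

/-- if `V` is Haar-distributed on `O(n)` (its law `μ` being the unique
left-translation-invariant Borel probability measure), `Ṽ` consists of the first `k`
columns of `V`, and `S ⊆ {1,…,n}` has `|S| = k`, then the `k×k` submatrix `Ṽ_S` of `Ṽ`
with rows indexed by `S` satisfies `E[det(Ṽ_S)²] = 1/C(n,k)`. -/
theorem expected_square_minor_haar {n k : ℕ} (hn : 1 ≤ n) (hk1 : 1 ≤ k)
    (hkn : k ≤ n)
    (μ : Measure (Matrix.orthogonalGroup (Fin n) ℝ)) [IsProbabilityMeasure μ]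
    (hinv : ∀ g : Matrix.orthogonalGroup (Fin n) ℝ,
      Measure.map (fun x => g * x) μ = μ)
    (S : Finset (Fin n)) (hS : S.card = k) :
    ∫ V : Matrix.orthogonalGroup (Fin n) ℝ,
        (((V : Matrix (Fin n) (Fin n) ℝ).submatrix
            (fun i : Fin k => (S.orderIsoOfFin hS i : Fin n))
            (Fin.castLE hkn)).det) ^ 2 ∂μ =
      1 / (n.choose k : ℝ) :=
  expected_square_minor_haar_general hkn μ hinv S hS
end
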